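/- Let f : ℝⁿ → ℝⁿ be continuous with linear growth. If (K_m) is a sequence of subsets of ℝⁿ each of which is viable under f, then the upper limit Limsup_{m→∞} K_m is viable under f. Consequently, for any sequence of subsets (C_m) of ℝⁿ, Limsup_{m→∞} Viab_f(C_m) ⊆ Viab_f(Limsup_{m→∞} C_m). -/

import Mathlib

/-!
A point `x₀` of `Limsup K_m` is the limit of points `p_k ∈ K_{m_k}` with `m_k → ∞`, and each `p_k`
starts a solution `y_k` viable in `K_{m_k}`. Linear growth and Grönwall's inequality bound the
`y_k`, hence their derivatives `f (y_k)`, uniformly on bounded time intervals, so the `y_k` are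
locally equi-Lipschitz and, by Arzelà–Ascoli, a subsequence converges locally uniformly. Passing to
the limit in `y_k t = y_k 0 + ∫₀ᵗ f (y_k s) ds` shows that the limit is a solution starting at `x₀`,
and at each time `t` it is the limit of `y_k t ∈ K_{m_k}`, hence lies in `Limsup K_m`.
Viability kernels are viable and `Viab_f(C_m) ⊆ C_m`, which gives the second claim.
-/

open Filter Set Metric Topology
open scoped ENNReal NNReal

noncomputable section

/-- `x` is a solution of `x' = f(x)` on the interval `I`. -/
def SolOn {E : Type*} [NormedAddCommGroup E] [NormedSpace ℝ E]
    (f : E → E) (x : ℝ → E) (I : Set ℝ) : Prop :=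
  ∀ t ∈ I, HasDerivWithinAt x (f (x t)) I t

/-- `S_f(x₀)`: the set of solutions of `x' = f(x)` on `[0,∞)` starting at `x₀`. -/
def Sols {E : Type*} [NormedAddCommGroup E] [NormedSpace ℝ E] (f : E → E) (x₀ : E) :
    Set (ℝ → E) :=
  {x | x 0 = x₀ ∧ SolOn f x (Set.Ici 0)}

/-- `f` has linear growth. -/
def LinGrowth {E : Type*} [NormedAddCommGroup E] [NormedSpace ℝ E] (f : E → E) : Prop :=
  ∃ c > (0:ℝ), ∀ x, ‖f x‖ ≤ c * (‖x‖ + 1)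

/-- `K` is (globally) viable under `f`. -/
def Viable {E : Type*} [NormedAddCommGroup E] [NormedSpace ℝ E]
    (f : E → E) (K : Set E) : Prop :=
  ∀ x₀ ∈ K, ∃ x ∈ Sols f x₀, ∀ t ∈ Set.Ici (0:ℝ), x t ∈ K

/-- The viability kernel of `K` under `f`. -/
def ViabKer {E : Type*} [NormedAddCommGroup E] [NormedSpace ℝ E]
    (f : E → E) (K : Set E) : Set E :=
  {x₀ ∈ K | ∃ x ∈ Sols f x₀, ∀ t ∈ Set.Ici (0:ℝ), x t ∈ K}

/-- The (Painlevé–Kuratowski) upper limit of a sequence of subsets: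
`Limsup A_m = {x : liminf_{m→∞} dist(x, A_m) = 0}`. -/
def limsupSets {E : Type*} [NormedAddCommGroup E] (A : ℕ → Set E) : Set E :=
  {x | Filter.liminf (fun m => EMetric.infEdist x (A m)) Filter.atTop = 0}

open scoped Uniformity

theorem ContinuousMap.exists_strictMono_tendsto_of_equicontinuousOn
    {X α : Type*} [TopologicalSpace X] [LocallyCompactSpace X] [SigmaCompactSpace X]
    [UniformSpace α] [T2Space α] [IsCountablyGenerated (𝓤 α)]
    (z : ℕ → C(X, α)) (heq : ∀ K, IsCompact K → EquicontinuousOn (fun k => ⇑(z k)) K)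
    (hbdd : ∀ x, ∃ Q, IsCompact Q ∧ ∀ k, z k x ∈ Q) :
    ∃ g : C(X, α), ∃ ψ : ℕ → ℕ, StrictMono ψ ∧ Tendsto (z ∘ ψ) atTop (𝓝 g) := by
  have hcpt : IsCompact (closure (range z)) := by
    refine ArzelaAscoli.isCompact_closure_of_isClosedEmbedding (𝔖 := {K | IsCompact K})
      (F := fun g : C(X, α) => ⇑g) (fun K hK => hK)
      ⟨isUniformEmbedding_toUniformOnFunIsCompact.isEmbedding, ?_⟩ ?_ ?_
    · change IsClosed (range (toUniformOnFunIsCompact (α := X) (β := α)))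
      rw [range_toUniformOnFunIsCompact]
      exact UniformOnFun.isClosed_setOfPred_continuous CompactlyCoherentSpace.isCoherentWith
    · intro K hK x hx U hU
      filter_upwards [heq K hK x hx U hU] with y hy
      rintro ⟨_, k, rfl⟩
      exact hy k
    · rintro K - x -
      obtain ⟨Q, hQ, hzQ⟩ := hbdd x
      exact ⟨Q, hQ, by rintro _ ⟨k, rfl⟩; exact hzQ k⟩
  obtain ⟨g, -, ψ, hψ, hlim⟩ := hcpt.tendsto_subseq (fun k => subset_closure (mem_range_self k))
  exact ⟨g, ψ, hψ, hlim⟩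

lemma equicontinuousOn_comp_max_of_lipschitzOnWith {ι α : Type*} [PseudoMetricSpace α]
    {y : ι → ℝ → α} (hy : ∀ T ≥ 0, ∃ L, ∀ i, LipschitzOnWith L (y i) (Icc 0 T))
    {K : Set ℝ} (hK : IsCompact K) :
    EquicontinuousOn (fun i t => y i (max t 0)) K := by
  obtain ⟨T, hT⟩ := hK.bddAbove
  obtain ⟨L, hL⟩ := hy (max T 0) (le_max_right T 0)
  have hmax : LipschitzOnWith 1 (fun t : ℝ => max t 0) (Iic (max T 0)) :=
    (LipschitzWith.id.max_const 0).lipschitzOnWith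
  have hmaps : MapsTo (fun t : ℝ => max t 0) (Iic (max T 0)) (Icc 0 (max T 0)) :=
    fun t ht => ⟨le_max_right t 0, max_le ht (le_max_right T 0)⟩
  refine (LipschitzOnWith.uniformEquicontinuousOn _ _
    (fun i => (hL i).comp hmax hmaps)).equicontinuousOn.mono ?_
  exact fun t ht => (hT ht).trans (le_max_left T 0)

section LimsupSets

variable {E : Type*} [NormedAddCommGroup E] {A B : ℕ → Set E} {x : E}

lemma limsupSets_mono (h : ∀ m, A m ⊆ B m) : limsupSets A ⊆ limsupSets B := by
  intro x (hx : liminf (fun m => infEDist x (A m)) atTop = 0)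
  exact nonpos_iff_eq_zero.1 <| hx ▸ liminf_le_liminf (.of_forall fun m => infEDist_anti (h m))

lemma exists_tendsto_of_mem_limsupSets (hx : x ∈ limsupSets A) :
    ∃ φ : ℕ → ℕ, ∃ p : ℕ → E,
      Tendsto φ atTop atTop ∧ (∀ k, p k ∈ A (φ k)) ∧ Tendsto p atTop (𝓝 x) := by
  have hnear : ∀ k : ℕ, ∃ m, k ≤ m ∧ ∃ p ∈ A m, dist p x < 1 / ((k : ℝ) + 1) := by
    intro k
    have hε : liminf (fun m => infEDist x (A m)) atTop < ENNReal.ofReal (1 / ((k : ℝ) + 1)) := by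
      rw [show liminf (fun m => infEDist x (A m)) atTop = 0 from hx]
      exact ENNReal.ofReal_pos.2 (by positivity)
    obtain ⟨m, hkm, hm⟩ :=
      frequently_atTop.1 (frequently_lt_of_liminf_lt (by isBoundedDefault) hε) k
    obtain ⟨p, hp, hpx⟩ := infEDist_lt_iff.1 hm
    exact ⟨m, hkm, p, hp, by rwa [dist_comm, ← edist_lt_ofReal]⟩
  choose φ hφ p hpA hpx using hnear
  refine ⟨φ, p, tendsto_atTop_mono hφ tendsto_id, hpA, ?_⟩
  exact tendsto_iff_dist_tendsto_zero.2 <| squeeze_zero (fun k => dist_nonneg)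
    (fun k => (hpx k).le) tendsto_one_div_add_atTop_nhds_zero_nat

lemma mem_limsupSets_of_tendsto {φ : ℕ → ℕ} {p : ℕ → E} (hφ : Tendsto φ atTop atTop)
    (hpA : ∀ k, p k ∈ A (φ k)) (hp : Tendsto p atTop (𝓝 x)) : x ∈ limsupSets A := by
  refine nonpos_iff_eq_zero.1 (le_of_forall_gt_imp_ge_of_dense fun ε hε => ?_)
  have hnear : ∃ᶠ k in atTop, edist x (p k) < ε :=
    (EMetric.tendsto_nhds.1 hp ε hε).mono (fun k hk => by rwa [edist_comm]) |>.frequently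
  have hfreq : ∃ᶠ m in atTop, infEDist x (A m) ≤ ε :=
    hφ.frequently_map _ (fun k hk => (infEDist_le_edist_of_mem (hpA k)).trans hk.le) hnear
  exact liminf_le_of_frequently_le hfreq

end LimsupSets

section Solutions

variable {E : Type*} [NormedAddCommGroup E] [NormedSpace ℝ E] {f : E → E} {x : ℝ → E}

lemma SolOn.mono {s t : Set ℝ} (hx : SolOn f x s) (hts : t ⊆ s) : SolOn f x t :=
  fun τ hτ => (hx τ (hts hτ)).mono hts

lemma SolOn.continuousOn {s : Set ℝ} (hx : SolOn f x s) : ContinuousOn x s :=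
  fun τ hτ => (hx τ hτ).continuousWithinAt

lemma SolOn.lipschitzOnWith {s : Set ℝ} {L : ℝ≥0} (hx : SolOn f x s) (hs : Convex ℝ s)
    (hL : ∀ τ ∈ s, ‖f (x τ)‖₊ ≤ L) : LipschitzOnWith L x s :=
  hs.lipschitzOnWith_of_nnnorm_hasDerivWithin_le hx hL

lemma SolOn.norm_le_gronwallBound {c δ t : ℝ} (hx : SolOn f x (Ici 0))
    (hgrowth : ∀ v, ‖f v‖ ≤ c * (‖v‖ + 1)) (h0 : ‖x 0‖ ≤ δ) (ht : 0 ≤ t) :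
    ‖x t‖ ≤ gronwallBound δ c c t := by
  have hIcc : SolOn f x (Icc 0 t) := hx.mono Icc_subset_Ici_self
  simpa using norm_le_gronwallBound_of_norm_deriv_right_le hIcc.continuousOn
    (fun τ hτ => (hx τ hτ.1).mono (Ici_subset_Ici.2 hτ.1)) h0
    (fun τ _ => (hgrowth (x τ)).trans_eq (by ring)) t ⟨ht, le_rfl⟩

lemma comp_add_const_mem_sols {x₀ : E} {τ : ℝ} (hx : x ∈ Sols f x₀) (hτ : 0 ≤ τ) :
    (fun t => x (t + τ)) ∈ Sols f (x τ) := by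
  refine ⟨by simp, fun t ht => ?_⟩
  have hshift : MapsTo (· + τ) (Ici (0 : ℝ)) (Ici 0) := fun s hs => add_nonneg hs hτ
  simpa [Function.comp_def] using
    (hx.2 (t + τ) (hshift ht)).scomp t ((hasDerivAt_id t).add_const τ).hasDerivWithinAt hshift

lemma viabKer_subset {C : Set E} : ViabKer f C ⊆ C :=
  sep_subset _ _

lemma viable_viabKer (C : Set E) : Viable f (ViabKer f C) := by
  rintro x₀ ⟨-, x, hx, hxC⟩
  refine ⟨x, hx, fun τ hτ => ⟨hxC τ hτ, _, comp_add_const_mem_sols hx hτ, fun t ht => ?_⟩⟩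
  exact hxC (t + τ) (add_nonneg (mem_Ici.1 ht) hτ)

variable [CompleteSpace E]

lemma SolOn.eq_add_integral (hf : Continuous f) (hx : SolOn f x (Ici 0)) {t : ℝ} (ht : 0 ≤ t) :
    x t = x 0 + ∫ s in 0..t, f (x s) := by
  have hcont : ContinuousOn x (Icc 0 t) := (hx.mono Icc_subset_Ici_self).continuousOn
  rw [intervalIntegral.integral_eq_sub_of_hasDerivAt_of_le ht hcont
    (fun s hs => (hx s hs.1.le).hasDerivAt (Ici_mem_nhds hs.1))
    ((hf.comp_continuousOn hcont).intervalIntegrable_of_Icc ht), add_sub_cancel]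

lemma solOn_Ici_of_eq_add_integral (hf : Continuous f) (hx : Continuous x)
    (h : ∀ t ≥ 0, x t = x 0 + ∫ s in 0..t, f (x s)) : SolOn f x (Ici 0) := by
  intro t ht
  have hfx : Continuous fun s => f (x s) := hf.comp hx
  have hFTC : HasDerivAt (fun u => x 0 + ∫ s in 0..u, f (x s)) (f (x t)) t :=
    (intervalIntegral.integral_hasDerivAt_right (hfx.intervalIntegrable _ _)
      (hfx.stronglyMeasurableAtFilter _ _) hfx.continuousAt).const_add _
  exact hFTC.hasDerivWithinAt.congr (fun s hs => h s hs) (h t ht)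

lemma solOn_Ici_of_tendsto (hf : Continuous f) {y : ℕ → ℝ → E} {x : ℝ → E}
    (hy : ∀ k, SolOn f (y k) (Ici 0)) (hx : Continuous x)
    (hlim : ∀ t ≥ 0, Tendsto (fun k => y k t) atTop (𝓝 (x t)))
    {B : ℝ → ℝ} (hB : Continuous B) (hbound : ∀ k, ∀ t ≥ 0, ‖f (y k t)‖ ≤ B t) :
    SolOn f x (Ici 0) := by
  refine solOn_Ici_of_eq_add_integral hf hx fun t ht => ?_
  have hint : Tendsto (fun k => ∫ s in 0..t, f (y k s)) atTop (𝓝 (∫ s in 0..t, f (x s))) := by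
    refine intervalIntegral.tendsto_integral_filter_of_dominated_convergence B
      (.of_forall fun k => ?_) (.of_forall fun k => .of_forall fun s hs => ?_)
      (hB.intervalIntegrable _ _) (.of_forall fun s hs => ?_)
    · rw [uIoc_of_le ht]
      have hyk : ContinuousOn (y k) (Ioc 0 t) := (hy k).continuousOn.mono fun s hs => hs.1.le
      exact (hf.comp_continuousOn hyk).aestronglyMeasurable measurableSet_Ioc
    · rw [uIoc_of_le ht] at hs
      exact hbound k s hs.1.le
    · rw [uIoc_of_le ht] at hs
      exact (hf.tendsto _).comp (hlim s hs.1.le)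
  have hsol : (fun k => y k t) = fun k => y k 0 + ∫ s in 0..t, f (y k s) :=
    funext fun k => (hy k).eq_add_integral hf ht
  exact tendsto_nhds_unique (hlim t ht) (hsol ▸ (hlim 0 le_rfl).add hint)

end Solutions

section Viability

variable {E : Type*} [NormedAddCommGroup E] [NormedSpace ℝ E] [ProperSpace E] {f : E → E}

theorem exists_strictMono_tendsto_mem_sols (hf : Continuous f) (hgrowth : LinGrowth f)
    {y : ℕ → ℝ → E} (hy : ∀ k, SolOn f (y k) (Ici 0)) {x₀ : E}
    (hy0 : Tendsto (fun k => y k 0) atTop (𝓝 x₀)) :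
    ∃ x ∈ Sols f x₀, ∃ ψ : ℕ → ℕ, StrictMono ψ ∧
      ∀ t ≥ 0, Tendsto (fun k => y (ψ k) t) atTop (𝓝 (x t)) := by
  obtain ⟨c, hc, hcf⟩ := hgrowth
  obtain ⟨δ, hδ⟩ := isBounded_iff_forall_norm_le.1 (isBounded_range_of_tendsto _ hy0)
  have hδ0 : 0 ≤ δ := (norm_nonneg _).trans (hδ _ (mem_range_self 0))
  set G := gronwallBound δ c c
  have hG : Continuous G :=
    continuous_iff_continuousAt.2 fun t => (hasDerivAt_gronwallBound δ c c t).continuousAt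
  have hyG : ∀ k, ∀ t ≥ 0, ‖y k t‖ ≤ G t := fun k t ht =>
    (hy k).norm_le_gronwallBound hcf (hδ _ (mem_range_self k)) ht
  have hfy : ∀ k, ∀ t ≥ 0, ‖f (y k t)‖ ≤ c * (G t + 1) := fun k t ht =>
    (hcf _).trans (mul_le_mul_of_nonneg_left (add_le_add_left (hyG k t ht) 1) hc.le)
  have hGmono : Monotone G := gronwallBound_mono hδ0 hc.le hc.le
  have hlip : ∀ T ≥ 0, ∃ L, ∀ k, LipschitzOnWith L (y k) (Icc 0 T) := fun T hT =>
    have hGT : 0 ≤ G T := hδ0.trans (gronwallBound_x0 δ c c ▸ hGmono hT)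
    ⟨⟨c * (G T + 1), by positivity⟩, fun k => ((hy k).mono Icc_subset_Ici_self).lipschitzOnWith
      (convex_Icc 0 T) fun t ht => (hfy k t ht.1).trans
        (mul_le_mul_of_nonneg_left (add_le_add_left (hGmono ht.2) 1) hc.le)⟩
  -- Extended constantly to the left of `0`, the solutions become elements of `C(ℝ, E)`.
  let z : ℕ → C(ℝ, E) := fun k => ⟨fun t => y k (max t 0),
    (hy k).continuousOn.comp_continuous (continuous_id.max continuous_const)
      fun t => le_max_right t 0⟩
  obtain ⟨g, ψ, hψ, hzg⟩ := ContinuousMap.exists_strictMono_tendsto_of_equicontinuousOn z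
    (fun K hK => equicontinuousOn_comp_max_of_lipschitzOnWith hlip hK)
    fun t => ⟨closedBall 0 (G (max t 0)), isCompact_closedBall _ _,
      fun k => mem_closedBall_zero_iff.2 (hyG k _ (le_max_right t 0))⟩
  have hlim : ∀ t ≥ 0, Tendsto (fun k => y (ψ k) t) atTop (𝓝 (g t)) := fun t ht => by
    simpa [z, Function.comp_def, max_eq_left ht] using
      ((continuous_eval_const t).tendsto g).comp hzg
  have hg0 : g 0 = x₀ := tendsto_nhds_unique (hlim 0 le_rfl) (hy0.comp hψ.tendsto_atTop)
  exact ⟨g, ⟨hg0, solOn_Ici_of_tendsto hf (fun k => hy (ψ k)) g.continuous hlim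
    (continuous_const.mul (hG.add continuous_const)) fun k => hfy (ψ k)⟩, ψ, hψ, hlim⟩

theorem viable_limsupSets (hf : Continuous f) (hgrowth : LinGrowth f) {K : ℕ → Set E}
    (hK : ∀ m, Viable f (K m)) : Viable f (limsupSets K) := by
  intro x₀ hx₀
  obtain ⟨φ, p, hφ, hpK, hp⟩ := exists_tendsto_of_mem_limsupSets hx₀
  choose y hy hyK using fun k => hK (φ k) (p k) (hpK k)
  obtain ⟨x, hx, ψ, hψ, hlim⟩ := exists_strictMono_tendsto_mem_sols hf hgrowth
    (fun k => (hy k).2) (by simpa only [fun k => (hy k).1] using hp)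
  exact ⟨x, hx, fun t ht =>
    mem_limsupSets_of_tendsto (hφ.comp hψ.tendsto_atTop) (fun k => hyK (ψ k) t ht) (hlim t ht)⟩

theorem limsupSets_viabKer_subset (hf : Continuous f) (hgrowth : LinGrowth f)
    (C : ℕ → Set E) : limsupSets (fun m => ViabKer f (C m)) ⊆ ViabKer f (limsupSets C) := by
  intro x₀ hx₀
  obtain ⟨x, hx, hxC⟩ := viable_limsupSets hf hgrowth (fun m => viable_viabKer (C m)) x₀ hx₀
  have hsub : limsupSets (fun m => ViabKer f (C m)) ⊆ limsupSets C :=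
    limsupSets_mono fun m => viabKer_subset
  exact ⟨hsub hx₀, x, hx, fun t ht => hsub (hxC t ht)⟩

end Viability

/-- Let `f : ℝⁿ → ℝⁿ` be continuous with linear growth. The upper limit of a sequence of
subsets viable under `f` is viable under `f`; consequently
`Limsup Viab_f(C_m) ⊆ Viab_f(Limsup C_m)`. -/
theorem limsup_viable_and_kernels {n : ℕ}
    (f : EuclideanSpace ℝ (Fin n) → EuclideanSpace ℝ (Fin n))
    (hf : Continuous f) (hgrowth : LinGrowth f) :
    (∀ Kseq : ℕ → Set (EuclideanSpace ℝ (Fin n)),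
      (∀ m, Viable f (Kseq m)) → Viable f (limsupSets Kseq)) ∧
    (∀ Cseq : ℕ → Set (EuclideanSpace ℝ (Fin n)),
      limsupSets (fun m => ViabKer f (Cseq m)) ⊆ ViabKer f (limsupSets Cseq)) :=
  ⟨fun _ hK => viable_limsupSets hf hgrowth hK, limsupSets_viabKer_subset hf hgrowth⟩
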